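/- Consider mismatched decoding of a binary-input channel with symmetric relative metrics q(z) and quantization parameter α. At a boundary b between the quantization regions of outputs z₁ and z₂ of a 2-PAM Gaussian channel with gain g, the optimality condition (ratio of likelihoods) gives e^{2bg} = -ln((1+e^{αq(z₁)})/(1+e^{αq(z₂)})) / ln((1+e^{-αq(z₁)})/(1+e^{-αq(z₂)})). If q(z₁) < q(z₂) and α > 0, the right-hand side is positive and greater than 1, hence b > 0 is well-defined. -/

import Mathlib

open Real

/-!
Write `L₊ = log ((1 + e^{αa}) / (1 + e^{αb}))` and `L₋ = log ((1 + e^{-αa}) / (1 + e^{-αb}))`.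
Since `t ↦ 1 + e^t` is increasing and `αa < αb`, we get `L₊ < 0 < L₋`, so `R = -L₊ / L₋ > 0`.
Moreover `L₊ + L₋ = log ((2 + 2 cosh αa) / (2 + 2 cosh αb))`, and `a + b > 0` together with
`a < b` gives `|αa| < αb`, hence `L₊ + L₋ < 0`, i.e. `R > 1`; then `e^{2 b g} = R` has the
positive solution `log R / (2 g)`.
-/

namespace Real

theorem log_one_add_exp_div_one_add_exp_lt_zero {x y : ℝ} (h : x < y) :
    log ((1 + exp x) / (1 + exp y)) < 0 :=
  log_neg (by positivity) <| (div_lt_one (by positivity)).2 <| by gcongr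

theorem log_one_add_exp_neg_div_one_add_exp_neg_pos {x y : ℝ} (h : x < y) :
    0 < log ((1 + exp (-x)) / (1 + exp (-y))) :=
  log_pos <| (one_lt_div (by positivity)).2 <| by gcongr

theorem one_add_exp_mul_one_add_exp_neg (x : ℝ) :
    (1 + exp x) * (1 + exp (-x)) = 2 + 2 * cosh x := by
  calc (1 + exp x) * (1 + exp (-x)) = 1 + exp x + exp (-x) + exp (x + -x) := by
        rw [exp_add]; ring
    _ = 2 + 2 * cosh x := by rw [add_neg_cancel, exp_zero, cosh_eq]; ring

theorem log_one_add_exp_div_add_log_one_add_exp_neg_div_lt_zero {x y : ℝ} (hxy : x < y)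
    (hsum : 0 < x + y) :
    log ((1 + exp x) / (1 + exp y)) + log ((1 + exp (-x)) / (1 + exp (-y))) < 0 := by
  have hcosh : cosh x < cosh y := cosh_lt_cosh.2 <| by
    rw [abs_of_pos (by linarith : 0 < y), abs_lt]
    constructor <;> linarith
  rw [← log_mul (by positivity) (by positivity), div_mul_div_comm,
    one_add_exp_mul_one_add_exp_neg, one_add_exp_mul_one_add_exp_neg]
  exact log_neg (by positivity) <| (div_lt_one (by positivity)).2 <| by linarith

theorem exists_pos_exp_two_mul_mul_eq {R g : ℝ} (hR : 1 < R) (hg : 0 < g) :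
    ∃ t : ℝ, 0 < t ∧ exp (2 * t * g) = R := by
  refine ⟨log R / (2 * g), div_pos (log_pos hR) (by positivity), ?_⟩
  rw [show 2 * (log R / (2 * g)) * g = log R by field_simp]
  exact exp_log (by linarith)

end Real

theorem stmt_16 (α a b : ℝ) (hα : 0 < α) (hab : a < b) :
    -- R is the right-hand side of the boundary optimality condition, with
    -- a = q(z₁), b = q(z₂) the relative metrics of the two quantized outputs
    let R : ℝ :=
      -(Real.log ((1 + Real.exp (α * a)) / (1 + Real.exp (α * b)))) /
        Real.log ((1 + Real.exp (-(α * a))) / (1 + Real.exp (-(α * b))))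
    Real.log ((1 + Real.exp (α * a)) / (1 + Real.exp (α * b))) < 0 ∧
      0 < Real.log ((1 + Real.exp (-(α * a))) / (1 + Real.exp (-(α * b)))) ∧
      0 < R ∧
      (0 < a + b →
        1 < R ∧
          -- hence the boundary b > 0 is well-defined via e^{2 b g} = R
          ∀ g : ℝ, 0 < g → ∃ bd : ℝ, 0 < bd ∧ Real.exp (2 * bd * g) = R) := by
  intro R
  have hlt : α * a < α * b := mul_lt_mul_of_pos_left hab hα
  have hneg := log_one_add_exp_div_one_add_exp_lt_zero hlt
  have hpos := log_one_add_exp_neg_div_one_add_exp_neg_pos hlt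
  refine ⟨hneg, hpos, div_pos (neg_pos.2 hneg) hpos, fun hsum => ?_⟩
  have hR : 1 < R := (one_lt_div hpos).2 <| by
    linarith [log_one_add_exp_div_add_log_one_add_exp_neg_div_lt_zero hlt
      (by rw [← mul_add]; positivity)]
  exact ⟨hR, fun g hg => exists_pos_exp_two_mul_mul_eq hR hg⟩
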